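/- Assume (H1)–(H3). Let τ ∈ [0, 1], ε > 0, and let n be a positive C² function on closure(Ω) × [−A, A] satisfying −∂_xx n − ε² ∂_θθ n + Ln = n (R − τρ − (1 − τ) n) on Ω × (−A, A), where ρ(x) = ∫_{−A}^{A} n(x, θ) dθ, with Neumann boundary conditions: ∂_x n(x, θ) = 0 whenever x is an endpoint of one of the intervals composing Ω, and ∂_θ n(x, ±A) = 0. Then ∫_Ω ∫_{−A}^{A} n(x, θ) dθ dx ≤ C_R · |Ω| · max(1, 2A). -/

import Mathlib

open MeasureTheory Set Real Filter Topology

noncomputable section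

/-- Partial derivative in the first (spatial) variable. -/
def pdx (f : ℝ → ℝ → ℝ) (x θ : ℝ) : ℝ := deriv (fun x' => f x' θ) x

/-- Partial derivative in the second (trait) variable. -/
def pdt (f : ℝ → ℝ → ℝ) (x θ : ℝ) : ℝ := deriv (fun θ' => f x θ') θ

/-- The nonlocal dispersion operator `L`, acting in the spatial variable. -/
def nlL (Ω : Set ℝ) (K : ℝ → ℝ) (f : ℝ → ℝ → ℝ) (x θ : ℝ) : ℝ :=
  ∫ y in Ω, (f x θ - f y θ) * K (x - y)

/-- Total population density at `x`. -/
def rhoTot (A : ℝ) (n : ℝ → ℝ → ℝ) (x : ℝ) : ℝ := ∫ θ in (-A)..A, n x θ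

/-- A positive solution of equation (E) with parameter `ε`:
a positive `C²` function satisfying the equation on `Ω × (-A, A)` together with
Neumann boundary conditions in both variables (`Endp` is the set of endpoints of the
intervals composing `Ω`). -/
def IsPosSolE (Ω Endp : Set ℝ) (A : ℝ) (K : ℝ → ℝ) (R : ℝ → ℝ → ℝ)
    (ε : ℝ) (n : ℝ → ℝ → ℝ) : Prop :=
  ContDiff ℝ 2 (Function.uncurry n) ∧
  (∀ x ∈ closure Ω, ∀ θ ∈ Icc (-A) A, 0 < n x θ) ∧
  (∀ x ∈ Ω, ∀ θ ∈ Ioo (-A) A,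
    -ε ^ 2 * pdt (pdt n) x θ - pdx (pdx n) x θ + nlL Ω K n x θ
      = n x θ * (R x θ - rhoTot A n x)) ∧
  (∀ x ∈ Endp, ∀ θ ∈ Icc (-A) A, pdx n x θ = 0) ∧
  (∀ x ∈ closure Ω, pdt n x A = 0 ∧ pdt n x (-A) = 0)

lemma cont_uncurry_left {F : ℝ → ℝ → ℝ} (h : Continuous (Function.uncurry F)) (θ : ℝ) :
    Continuous fun x => F x θ := h.comp (continuous_id.prodMk continuous_const)

lemma cont_uncurry_right {F : ℝ → ℝ → ℝ} (h : Continuous (Function.uncurry F)) (x : ℝ) :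
    Continuous fun θ => F x θ := h.comp (continuous_const.prodMk continuous_id)

lemma contDiff_partial_left {f : ℝ → ℝ → ℝ} {k : ℕ∞} (h : ContDiff ℝ k (Function.uncurry f))
    (θ : ℝ) : ContDiff ℝ k fun x => f x θ := h.comp (contDiff_id.prodMk contDiff_const)

lemma contDiff_partial_right {f : ℝ → ℝ → ℝ} {k : ℕ∞} (h : ContDiff ℝ k (Function.uncurry f))
    (x : ℝ) : ContDiff ℝ k fun θ => f x θ := h.comp (contDiff_const.prodMk contDiff_id)

lemma hasDerivAt_pdx {f : ℝ → ℝ → ℝ} (h : ContDiff ℝ 1 (Function.uncurry f)) (x θ : ℝ) :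
    HasDerivAt (fun x' => f x' θ) (pdx f x θ) x :=
  (((contDiff_partial_left h θ).differentiable (by simp)) x).hasDerivAt

lemma hasDerivAt_pdt {f : ℝ → ℝ → ℝ} (h : ContDiff ℝ 1 (Function.uncurry f)) (x θ : ℝ) :
    HasDerivAt (fun θ' => f x θ') (pdt f x θ) θ :=
  (((contDiff_partial_right h x).differentiable (by simp)) θ).hasDerivAt

lemma pdx_eq_fderiv {f : ℝ → ℝ → ℝ} {k : ℕ∞} (h : ContDiff ℝ (k + 1) (Function.uncurry f))
    (p : ℝ × ℝ) : pdx f p.1 p.2 = fderiv ℝ (Function.uncurry f) p (1, 0) := by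
  have hd : HasFDerivAt (Function.uncurry f) (fderiv ℝ (Function.uncurry f) p) p :=
    ((h.differentiable (by simp)) p).hasFDerivAt
  have hg : HasDerivAt (fun x' : ℝ => (x', p.2)) ((1 : ℝ), (0 : ℝ)) p.1 :=
    (hasDerivAt_id p.1).prodMk (hasDerivAt_const p.1 p.2)
  have hp : HasDerivAt (fun x' => f x' p.2) (fderiv ℝ (Function.uncurry f) p (1, 0)) p.1 := by
    simpa [Function.comp_def, Function.uncurry] using hd.comp_hasDerivAt p.1 hg
  exact hp.deriv

lemma pdt_eq_fderiv {f : ℝ → ℝ → ℝ} {k : ℕ∞} (h : ContDiff ℝ (k + 1) (Function.uncurry f))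
    (p : ℝ × ℝ) : pdt f p.1 p.2 = fderiv ℝ (Function.uncurry f) p (0, 1) := by
  have hd : HasFDerivAt (Function.uncurry f) (fderiv ℝ (Function.uncurry f) p) p :=
    ((h.differentiable (by simp)) p).hasFDerivAt
  have hg : HasDerivAt (fun θ' : ℝ => (p.1, θ')) ((0 : ℝ), (1 : ℝ)) p.2 :=
    (hasDerivAt_const p.2 p.1).prodMk (hasDerivAt_id p.2)
  have hp : HasDerivAt (fun θ' => f p.1 θ') (fderiv ℝ (Function.uncurry f) p (0, 1)) p.2 := by
    simpa [Function.comp_def, Function.uncurry] using hd.comp_hasDerivAt p.2 hg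
  exact hp.deriv

lemma contDiff_uncurry_pdx {f : ℝ → ℝ → ℝ} {k : ℕ∞} (h : ContDiff ℝ (k + 1) (Function.uncurry f)) :
    ContDiff ℝ k (Function.uncurry (pdx f)) := by
  have : Function.uncurry (pdx f) = fun p => (fderiv ℝ (Function.uncurry f) p) (1, 0) :=
    funext fun p => pdx_eq_fderiv h p
  rw [this]
  exact (h.fderiv_right le_rfl).clm_apply contDiff_const

lemma contDiff_uncurry_pdt {f : ℝ → ℝ → ℝ} {k : ℕ∞} (h : ContDiff ℝ (k + 1) (Function.uncurry f)) :
    ContDiff ℝ k (Function.uncurry (pdt f)) := by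
  have : Function.uncurry (pdt f) = fun p => (fderiv ℝ (Function.uncurry f) p) (0, 1) :=
    funext fun p => pdt_eq_fderiv h p
  rw [this]
  exact (h.fderiv_right le_rfl).clm_apply contDiff_const

lemma integrableOn_of_subset_compact {s J1 : Set ℝ} (hsJ : s ⊆ J1) (hJ1 : IsCompact J1)
    {f : ℝ → ℝ} (hf : Continuous f) : IntegrableOn f s :=
  (hf.continuousOn.integrableOn_compact hJ1).mono_set hsJ

lemma integrable_prod_restrict {s t J1 J2 : Set ℝ} (hsJ : s ⊆ J1) (htJ : t ⊆ J2)
    (hJ1 : IsCompact J1) (hJ2 : IsCompact J2) {F : ℝ × ℝ → ℝ} (hF : Continuous F) :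
    Integrable F ((volume.restrict s).prod (volume.restrict t)) := by
  rw [Measure.prod_restrict]
  have h1 : IntegrableOn F (J1 ×ˢ J2) (volume.prod volume) := by
    rw [← Measure.volume_eq_prod]
    exact hF.continuousOn.integrableOn_compact (hJ1.prod hJ2)
  exact h1.mono_set (Set.prod_mono hsJ htJ)

lemma integral_antisymm_zero {μ : Measure ℝ} [SFinite μ] {F : ℝ → ℝ → ℝ}
    (hint : Integrable (Function.uncurry F) (μ.prod μ))
    (hanti : ∀ x y, F x y = -F y x) :
    ∫ x, ∫ y, F x y ∂μ ∂μ = 0 := by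
  have h1 : ∫ x, ∫ y, F x y ∂μ ∂μ = ∫ y, ∫ x, F x y ∂μ ∂μ := integral_integral_swap hint
  have h2 : ∀ y, ∫ x, F x y ∂μ = -∫ x, F y x ∂μ := by
    intro y
    rw [← integral_neg]
    exact integral_congr_ae (Eventually.of_forall fun x => hanti x y)
  have h3 : ∫ y, ∫ x, F x y ∂μ ∂μ = -∫ y, ∫ x, F y x ∂μ ∂μ := by
    simp_rw [h2]; exact integral_neg _
  have h4 : ∫ y, ∫ x, F y x ∂μ ∂μ = ∫ x, ∫ y, F x y ∂μ ∂μ := rfl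
  rw [h4] at h3
  linarith [h1, h3]

lemma sq_integral_le_measure_mul_integral_sq {α : Type*} [MeasurableSpace α] {μ : Measure α}
    [IsFiniteMeasure μ] {f : α → ℝ} (hf : Integrable f μ) (hf2 : Integrable (fun x => f x ^ 2) μ) :
    (∫ x, f x ∂μ) ^ 2 ≤ (μ univ).toReal * ∫ x, f x ^ 2 ∂μ := by
  set c := (μ univ).toReal with hc
  set I := ∫ x, f x ∂μ with hI
  set Jq := ∫ x, f x ^ 2 ∂μ with hJ
  have hc0 : 0 ≤ c := ENNReal.toReal_nonneg
  rcases eq_or_lt_of_le hc0 with hc' | hc'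
  · have hμ : μ = 0 := by
      have := (ENNReal.toReal_eq_zero_iff _).mp hc'.symm
      rcases this with h | h
      · exact Measure.measure_univ_eq_zero.mp h
      · exact absurd h (measure_ne_top μ univ)
    have hI0 : I = 0 := by rw [hI, hμ, integral_zero_measure]
    have hJ0 : Jq = 0 := by rw [hJ, hμ, integral_zero_measure]
    rw [hI0, hJ0]; norm_num
  · have hkey : 0 ≤ ∫ x, (c * f x - I) ^ 2 ∂μ := integral_nonneg fun x => sq_nonneg _
    have hexp : ∫ x, (c * f x - I) ^ 2 ∂μ = c ^ 2 * Jq - 2 * c * I * I + I ^ 2 * c := by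
      have h1 : Integrable (fun x => c ^ 2 * f x ^ 2) μ := hf2.const_mul _
      have h2 : Integrable (fun x => 2 * c * I * f x) μ := hf.const_mul _
      have heq : (fun x => (c * f x - I) ^ 2)
          = fun x => (c ^ 2 * f x ^ 2 - 2 * c * I * f x) + I ^ 2 := by funext x; ring
      have h12 : Integrable (fun x => c ^ 2 * f x ^ 2 - 2 * c * I * f x) μ := h1.sub h2
      rw [heq, integral_add h12 (integrable_const _), integral_sub h1 h2,
        integral_const_mul, integral_const_mul, integral_const]
      rw [← hI, ← hJ, smul_eq_mul, measureReal_def, ← hc]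
      ring
    have h3 : c * I ^ 2 ≤ c * (c * Jq) := by nlinarith [hkey, hexp]
    exact le_of_mul_le_mul_left h3 hc'

/-- upper bound on the total mass of any positive solution of the
homotopy equation (E_τ). -/
theorem mass_upper_bound_homotopy
    (m : ℕ) (a b : Fin (m + 1) → ℝ) (Ω : Set ℝ)
    (hab : ∀ i, a i < b i)
    (hord : ∀ i j : Fin (m + 1), i < j → b i < a j)
    (hΩ : Ω = ⋃ i, Ioo (a i) (b i))
    (A : ℝ) (hA : 0 < A)
    (R : ℝ → ℝ → ℝ) (C_R : ℝ)
    (hRsmooth : ContDiff ℝ 1 (Function.uncurry R))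
    (hRbound : ∀ x ∈ closure Ω, ∀ θ ∈ Icc (-A) A,
      |R x θ| ≤ C_R ∧ |pdx R x θ| ≤ C_R ∧ |pdt R x θ| ≤ C_R)
    (K : ℝ → ℝ) (c_K C_K : ℝ)
    (hKsmooth : ContDiff ℝ 1 K)
    (hKeven : ∀ x, K (-x) = K x)
    (hcK : 0 < c_K)
    (hKbound : ∀ x, c_K ≤ K x ∧ K x ≤ C_K ∧ |deriv K x| ≤ C_K)
    (τ ε : ℝ) (hτ : τ ∈ Icc (0 : ℝ) 1) (hε : 0 < ε)
    (n : ℝ → ℝ → ℝ)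
    (hC2 : ContDiff ℝ 2 (Function.uncurry n))
    (hpos : ∀ x ∈ closure Ω, ∀ θ ∈ Icc (-A) A, 0 < n x θ)
    (hpde : ∀ x ∈ Ω, ∀ θ ∈ Ioo (-A) A,
      -pdx (pdx n) x θ - ε ^ 2 * pdt (pdt n) x θ + nlL Ω K n x θ
        = n x θ * (R x θ - τ * rhoTot A n x - (1 - τ) * n x θ))
    (hNx : ∀ x ∈ range a ∪ range b, ∀ θ ∈ Icc (-A) A, pdx n x θ = 0)
    (hNt : ∀ x ∈ closure Ω, pdt n x A = 0 ∧ pdt n x (-A) = 0) :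
    (∫ x in Ω, ∫ θ in (-A)..A, n x θ) ≤ C_R * (volume Ω).toReal * max 1 (2 * A) := by
  have hAle : (-A) ≤ A := by linarith
  have hnc : Continuous (Function.uncurry n) := hC2.continuous
  have hKc : Continuous K := hKsmooth.continuous
  have hRc : Continuous (Function.uncurry R) := hRsmooth.continuous
  have hC2' : ContDiff ℝ ((1 : ℕ∞) + 1) (Function.uncurry n) := hC2.of_le (by norm_num)
  have hpdx1 : ContDiff ℝ 1 (Function.uncurry (pdx n)) := contDiff_uncurry_pdx hC2'
  have hpdt1 : ContDiff ℝ 1 (Function.uncurry (pdt n)) := contDiff_uncurry_pdt hC2'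
  have hpdx1' : ContDiff ℝ ((0 : ℕ∞) + 1) (Function.uncurry (pdx n)) := hpdx1.of_le (by norm_num)
  have hpdt1' : ContDiff ℝ ((0 : ℕ∞) + 1) (Function.uncurry (pdt n)) := hpdt1.of_le (by norm_num)
  have hpdxx_c : Continuous (Function.uncurry (pdx (pdx n))) :=
    (contDiff_uncurry_pdx hpdx1').continuous
  have hpdtt_c : Continuous (Function.uncurry (pdt (pdt n))) :=
    (contDiff_uncurry_pdt hpdt1').continuous
  -- geometry
  set J : Set ℝ := Icc (a 0) (b (Fin.last m)) with hJdef
  have hΩmeas : MeasurableSet Ω := by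
    rw [hΩ]; exact MeasurableSet.iUnion fun i => measurableSet_Ioo
  have hai : ∀ i, a 0 ≤ a i := by
    intro i
    rcases eq_or_ne i 0 with h | h
    · rw [h]
    · have h0 : (0 : Fin (m + 1)) < i := Fin.pos_of_ne_zero h
      linarith [hord 0 i h0, hab 0]
  have hbi : ∀ i, b i ≤ b (Fin.last m) := by
    intro i
    rcases eq_or_ne i (Fin.last m) with h | h
    · rw [h]
    · have h0 : i < Fin.last m := lt_of_le_of_ne (Fin.le_last i) h
      linarith [hord i (Fin.last m) h0, hab (Fin.last m)]
  have hΩJ : Ω ⊆ J := by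
    rw [hΩ]
    refine iUnion_subset fun i x hx => ?_
    exact ⟨le_trans (hai i) hx.1.le, le_trans hx.2.le (hbi i)⟩
  have hJcl : IsCompact J := isCompact_Icc
  have hΩfin : volume Ω < ⊤ := lt_of_le_of_lt (measure_mono hΩJ) hJcl.measure_lt_top
  haveI : Fact (volume Ω < ⊤) := ⟨hΩfin⟩
  -- rho
  set ρ : ℝ → ℝ := fun x => ∫ θ in Ioc (-A) A, n x θ with hρdef
  have hρx : ∀ x, (∫ θ in Ioc (-A) A, n x θ) = ρ x := fun _ => rfl
  have hρ_eq : ∀ x, rhoTot A n x = ρ x := fun x => intervalIntegral.integral_of_le hAle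
  have hρc : Continuous ρ := by
    rw [continuous_iff_continuousAt]
    intro x₀
    obtain ⟨M, hM⟩ : ∃ M, ∀ p ∈ Icc (x₀ - 1) (x₀ + 1) ×ˢ Icc (-A) A,
        ‖Function.uncurry n p‖ ≤ M :=
      (isCompact_Icc.prod isCompact_Icc).exists_bound_of_continuousOn hnc.continuousOn
    apply continuousAt_of_dominated (bound := fun _ => M)
    · exact Eventually.of_forall fun x => (cont_uncurry_right hnc x).aestronglyMeasurable
    · have hev : ∀ᶠ x in 𝓝 x₀, x ∈ Icc (x₀ - 1) (x₀ + 1) :=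
        Icc_mem_nhds (by linarith) (by linarith)
      filter_upwards [hev] with x hx
      filter_upwards [ae_restrict_mem measurableSet_Ioc] with θ hθ
      exact hM (x, θ) ⟨hx, Ioc_subset_Icc_self hθ⟩
    · exact integrable_const _
    · exact Eventually.of_forall fun θ => (cont_uncurry_left hnc θ).continuousAt
  -- sum decomposition of Ω
  have hdisj : Pairwise (Function.onFun Disjoint fun i => Ioo (a i) (b i)) := by
    intro i j hij
    rcases lt_or_gt_of_ne hij with h | h
    · refine Set.disjoint_left.mpr fun x hx hx' => ?_
      have := hord i j h; have := hx.2; have := hx'.1; linarith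
    · refine Set.disjoint_left.mpr fun x hx hx' => ?_
      have := hord j i h; have := hx'.2; have := hx.1; linarith
  have hsum : ∀ f : ℝ → ℝ, IntegrableOn f Ω →
      ∫ x in Ω, f x = ∑ i, ∫ x in Ioo (a i) (b i), f x := by
    intro f hf
    rw [hΩ] at hf ⊢
    rw [integral_iUnion (fun i => measurableSet_Ioo) hdisj hf, tsum_fintype]
  -- step B : x-integral of second x-derivative vanishes
  have stepB : ∀ θ ∈ Icc (-A) A, ∫ x in Ω, pdx (pdx n) x θ = 0 := by
    intro θ hθ
    have hcont : Continuous fun x => pdx (pdx n) x θ := cont_uncurry_left hpdxx_c θ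
    rw [hsum _ (integrableOn_of_subset_compact hΩJ hJcl hcont)]
    refine Finset.sum_eq_zero fun i _ => ?_
    rw [← integral_Ioc_eq_integral_Ioo, ← intervalIntegral.integral_of_le (hab i).le]
    have h1 : ∀ x ∈ uIcc (a i) (b i), DifferentiableAt ℝ (fun x' => pdx n x' θ) x :=
      fun x _ => ((contDiff_partial_left hpdx1 θ).differentiable (by simp)) x
    have h2 : IntervalIntegrable (deriv fun x' => pdx n x' θ) volume (a i) (b i) :=
      hcont.intervalIntegrable _ _
    have h3 : ∫ x in (a i)..(b i), pdx (pdx n) x θ = pdx n (b i) θ - pdx n (a i) θ :=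
      intervalIntegral.integral_deriv_eq_sub h1 h2
    rw [h3, hNx (b i) (Or.inr ⟨i, rfl⟩) θ hθ, hNx (a i) (Or.inl ⟨i, rfl⟩) θ hθ, sub_zero]
  -- step A : θ-integral of second θ-derivative vanishes
  have stepA : ∀ x ∈ closure Ω, ∫ θ in Ioc (-A) A, pdt (pdt n) x θ = 0 := by
    intro x hx
    rw [← intervalIntegral.integral_of_le hAle]
    have h1 : ∀ θ ∈ uIcc (-A) A, DifferentiableAt ℝ (fun θ' => pdt n x θ') θ :=
      fun θ _ => ((contDiff_partial_right hpdt1 x).differentiable (by simp)) θ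
    have h2 : IntervalIntegrable (deriv fun θ' => pdt n x θ') volume (-A) A :=
      (cont_uncurry_right hpdtt_c x).intervalIntegrable _ _
    have h3 : ∫ θ in (-A)..A, pdt (pdt n) x θ = pdt n x A - pdt n x (-A) :=
      intervalIntegral.integral_deriv_eq_sub h1 h2
    rw [h3, (hNt x hx).1, (hNt x hx).2, sub_zero]
  -- step C : nonlocal term
  have hGint : ∀ x : ℝ, Integrable (Function.uncurry fun (θ y : ℝ) => (n x θ - n y θ) * K (x - y))
      ((volume.restrict (Ioc (-A) A)).prod (volume.restrict Ω)) := by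
    intro x
    apply integrable_prod_restrict Ioc_subset_Icc_self hΩJ isCompact_Icc hJcl
    exact (((cont_uncurry_right hnc x).comp continuous_fst).sub
        (hnc.comp (continuous_snd.prodMk continuous_fst))).mul
      (hKc.comp (continuous_const.sub continuous_snd))
  have hnlL_int : ∀ x : ℝ, IntegrableOn (fun θ => nlL Ω K n x θ) (Ioc (-A) A) :=
    fun x => (hGint x).integral_prod_left
  have stepC1 : ∀ x : ℝ,
      ∫ θ in Ioc (-A) A, nlL Ω K n x θ = ∫ y in Ω, (ρ x - ρ y) * K (x - y) := by
    intro x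
    have hITn : ∀ z : ℝ, IntegrableOn (fun θ => n z θ) (Ioc (-A) A) := fun z =>
      integrableOn_of_subset_compact Ioc_subset_Icc_self isCompact_Icc (cont_uncurry_right hnc z)
    have hswap : (∫ θ in Ioc (-A) A, ∫ y in Ω, (n x θ - n y θ) * K (x - y))
        = ∫ y in Ω, ∫ θ in Ioc (-A) A, (n x θ - n y θ) * K (x - y) :=
      integral_integral_swap (hGint x)
    have hinner : ∀ y : ℝ,
        (∫ θ in Ioc (-A) A, (n x θ - n y θ) * K (x - y)) = (ρ x - ρ y) * K (x - y) := by
      intro y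
      rw [integral_mul_const]
      congr 1
      exact integral_sub (hITn x) (hITn y)
    calc (∫ θ in Ioc (-A) A, nlL Ω K n x θ)
        = ∫ y in Ω, ∫ θ in Ioc (-A) A, (n x θ - n y θ) * K (x - y) := hswap
      _ = ∫ y in Ω, (ρ x - ρ y) * K (x - y) :=
          integral_congr_ae (Eventually.of_forall hinner)
  have hFρint : Integrable (Function.uncurry fun x y => (ρ x - ρ y) * K (x - y))
      ((volume.restrict Ω).prod (volume.restrict Ω)) := by
    apply integrable_prod_restrict hΩJ hΩJ hJcl hJcl
    exact ((hρc.comp continuous_fst).sub (hρc.comp continuous_snd)).mul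
      (hKc.comp (continuous_fst.sub continuous_snd))
  have hW0 : (∫ x in Ω, ∫ y in Ω, (ρ x - ρ y) * K (x - y)) = 0 := by
    apply integral_antisymm_zero hFρint
    intro x y
    have hk : K (y - x) = K (x - y) := by rw [show y - x = -(x - y) by ring, hKeven]
    rw [hk]; ring
  -- integrability on It of continuous functions
  have hITc : ∀ g : ℝ → ℝ, Continuous g → IntegrableOn g (Ioc (-A) A) := fun g hg =>
    integrableOn_of_subset_compact Ioc_subset_Icc_self isCompact_Icc hg
  -- pointwise-in-x integrated equation
  have eqx : ∀ x ∈ Ω, (∫ θ in Ioc (-A) A, n x θ * (R x θ - τ * ρ x - (1 - τ) * n x θ))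
      = -(∫ θ in Ioc (-A) A, pdx (pdx n) x θ) + ∫ y in Ω, (ρ x - ρ y) * K (x - y) := by
    intro x hx
    have h1 : (∫ θ in Ioc (-A) A, n x θ * (R x θ - τ * ρ x - (1 - τ) * n x θ))
        = ∫ θ in Ioc (-A) A,
            (-pdx (pdx n) x θ - ε ^ 2 * pdt (pdt n) x θ + nlL Ω K n x θ) := by
      rw [integral_Ioc_eq_integral_Ioo, integral_Ioc_eq_integral_Ioo]
      apply setIntegral_congr_fun measurableSet_Ioo
      intro θ hθ
      show n x θ * (R x θ - τ * ρ x - (1 - τ) * n x θ)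
          = -pdx (pdx n) x θ - ε ^ 2 * pdt (pdt n) x θ + nlL Ω K n x θ
      rw [hpde x hx θ hθ, hρ_eq x]
    have i1 : IntegrableOn (fun θ => pdx (pdx n) x θ) (Ioc (-A) A) :=
      hITc _ (cont_uncurry_right hpdxx_c x)
    have i2 : IntegrableOn (fun θ => ε ^ 2 * pdt (pdt n) x θ) (Ioc (-A) A) :=
      (hITc _ (cont_uncurry_right hpdtt_c x)).const_mul _
    have i1n : IntegrableOn (fun θ => -pdx (pdx n) x θ) (Ioc (-A) A) := i1.neg
    have i12 : IntegrableOn (fun θ => -pdx (pdx n) x θ - ε ^ 2 * pdt (pdt n) x θ)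
        (Ioc (-A) A) := i1n.sub i2
    have h2 : (∫ θ in Ioc (-A) A,
          (-pdx (pdx n) x θ - ε ^ 2 * pdt (pdt n) x θ + nlL Ω K n x θ))
        = -(∫ θ in Ioc (-A) A, pdx (pdx n) x θ)
          - ε ^ 2 * (∫ θ in Ioc (-A) A, pdt (pdt n) x θ)
          + ∫ θ in Ioc (-A) A, nlL Ω K n x θ := by
      rw [integral_add i12 (hnlL_int x), integral_sub i1n i2, integral_neg,
        integral_const_mul]
    rw [h1, h2, stepA x (subset_closure hx), stepC1 x]
    ring
  -- the total integral of the reaction term vanishes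
  have hintΩ_pdxx2 : Integrable (Function.uncurry fun x θ => pdx (pdx n) x θ)
      ((volume.restrict Ω).prod (volume.restrict (Ioc (-A) A))) :=
    integrable_prod_restrict hΩJ Ioc_subset_Icc_self hJcl isCompact_Icc hpdxx_c
  have hintΩ_pdxx : Integrable (fun x => ∫ θ in Ioc (-A) A, pdx (pdx n) x θ)
      (volume.restrict Ω) := hintΩ_pdxx2.integral_prod_left
  have hintΩ_W : Integrable (fun x => ∫ y in Ω, (ρ x - ρ y) * K (x - y))
      (volume.restrict Ω) := hFρint.integral_prod_left
  have hswap2 : (∫ x in Ω, ∫ θ in Ioc (-A) A, pdx (pdx n) x θ)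
      = ∫ θ in Ioc (-A) A, ∫ x in Ω, pdx (pdx n) x θ := integral_integral_swap hintΩ_pdxx2
  have hpdxx0 : (∫ x in Ω, ∫ θ in Ioc (-A) A, pdx (pdx n) x θ) = 0 := by
    rw [hswap2]
    have h0 : EqOn (fun θ => ∫ x in Ω, pdx (pdx n) x θ) (fun _ => (0 : ℝ)) (Ioc (-A) A) :=
      fun θ hθ => stepB θ (Ioc_subset_Icc_self hθ)
    rw [setIntegral_congr_fun measurableSet_Ioc h0]
    simp
  have main0 : (∫ x in Ω, ∫ θ in Ioc (-A) A, n x θ * (R x θ - τ * ρ x - (1 - τ) * n x θ)) = 0 := by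
    rw [setIntegral_congr_fun hΩmeas (fun x hx => eqx x hx)]
    have hneg : Integrable (fun x => -(∫ θ in Ioc (-A) A, pdx (pdx n) x θ))
        (volume.restrict Ω) := hintΩ_pdxx.neg
    rw [integral_add hneg hintΩ_W, integral_neg, hpdxx0, hW0]
    ring
  -- expand the reaction integral
  have expand : ∀ x : ℝ, (∫ θ in Ioc (-A) A, n x θ * (R x θ - τ * ρ x - (1 - τ) * n x θ))
      = (∫ θ in Ioc (-A) A, n x θ * R x θ) - τ * ρ x ^ 2
        - (1 - τ) * ∫ θ in Ioc (-A) A, n x θ ^ 2 := by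
    intro x
    have i1 : IntegrableOn (fun θ => n x θ * R x θ) (Ioc (-A) A) :=
      hITc _ ((cont_uncurry_right hnc x).mul (cont_uncurry_right hRc x))
    have i2 : IntegrableOn (fun θ => (τ * ρ x) * n x θ) (Ioc (-A) A) :=
      (hITc _ (cont_uncurry_right hnc x)).const_mul _
    have i3 : IntegrableOn (fun θ => (1 - τ) * n x θ ^ 2) (Ioc (-A) A) :=
      (hITc _ ((cont_uncurry_right hnc x).pow 2)).const_mul _
    have heq : EqOn (fun θ => n x θ * (R x θ - τ * ρ x - (1 - τ) * n x θ))
        (fun θ => (n x θ * R x θ - (τ * ρ x) * n x θ) - (1 - τ) * n x θ ^ 2)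
        (Ioc (-A) A) := fun θ _ => by ring
    have i12' : IntegrableOn (fun θ => n x θ * R x θ - (τ * ρ x) * n x θ) (Ioc (-A) A) :=
      i1.sub i2
    rw [setIntegral_congr_fun measurableSet_Ioc heq, integral_sub i12' i3,
      integral_sub i1 i2, integral_const_mul, integral_const_mul, hρx]
    ring
  -- names for the main quantities
  set c := (volume Ω).toReal with hcdef
  set B := max 1 (2 * A) with hBdef
  set P := ∫ x in Ω, ∫ θ in Ioc (-A) A, n x θ * R x θ with hP
  set Q1 := ∫ x in Ω, ρ x ^ 2 with hQ1
  set Q2 := ∫ x in Ω, ∫ θ in Ioc (-A) A, n x θ ^ 2 with hQ2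
  set Mtot := ∫ x in Ω, ρ x with hM
  have iP : Integrable (fun x => ∫ θ in Ioc (-A) A, n x θ * R x θ) (volume.restrict Ω) :=
    (integrable_prod_restrict hΩJ Ioc_subset_Icc_self hJcl isCompact_Icc
      (hnc.mul hRc)).integral_prod_left
  have iQ1 : IntegrableOn (fun x => ρ x ^ 2) Ω :=
    integrableOn_of_subset_compact hΩJ hJcl (hρc.pow 2)
  have iQ2 : Integrable (fun x => ∫ θ in Ioc (-A) A, n x θ ^ 2) (volume.restrict Ω) :=
    (integrable_prod_restrict hΩJ Ioc_subset_Icc_self hJcl isCompact_Icc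
      (hnc.pow 2)).integral_prod_left
  have iρ : IntegrableOn ρ Ω := integrableOn_of_subset_compact hΩJ hJcl hρc
  have key : P = τ * Q1 + (1 - τ) * Q2 := by
    have h := main0
    rw [setIntegral_congr_fun hΩmeas (fun x _ => expand x)] at h
    have j2 : Integrable (fun x => τ * ρ x ^ 2) (volume.restrict Ω) := iQ1.const_mul τ
    have j3 : Integrable (fun x => (1 - τ) * ∫ θ in Ioc (-A) A, n x θ ^ 2)
        (volume.restrict Ω) := iQ2.const_mul _
    have j12 : Integrable (fun x => (∫ θ in Ioc (-A) A, n x θ * R x θ) - τ * ρ x ^ 2)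
        (volume.restrict Ω) := iP.sub j2
    rw [integral_sub j12 j3, integral_sub iP j2, integral_const_mul,
      integral_const_mul, ← hP, ← hQ1, ← hQ2] at h
    linarith
  -- P ≤ C_R * Mtot
  have hPle : P ≤ C_R * Mtot := by
    have hinner : ∀ x ∈ Ω, (∫ θ in Ioc (-A) A, n x θ * R x θ) ≤ C_R * ρ x := by
      intro x hx
      have h1 : (∫ θ in Ioc (-A) A, n x θ * R x θ) ≤ ∫ θ in Ioc (-A) A, C_R * n x θ := by
        apply setIntegral_mono_on
          (hITc _ ((cont_uncurry_right hnc x).mul (cont_uncurry_right hRc x)))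
          ((hITc _ (cont_uncurry_right hnc x)).const_mul _) measurableSet_Ioc
        intro θ hθ
        have hn := hpos x (subset_closure hx) θ (Ioc_subset_Icc_self hθ)
        have hR := (hRbound x (subset_closure hx) θ (Ioc_subset_Icc_self hθ)).1
        show n x θ * R x θ ≤ C_R * n x θ
        nlinarith [abs_le.mp hR]
      rw [integral_const_mul, hρx] at h1
      exact h1
    calc P ≤ ∫ x in Ω, C_R * ρ x :=
          setIntegral_mono_on iP (iρ.const_mul _) hΩmeas hinner
      _ = C_R * Mtot := by rw [integral_const_mul]
  -- nonnegativity
  have hρ0 : ∀ x ∈ Ω, 0 ≤ ρ x := fun x hx =>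
    setIntegral_nonneg measurableSet_Ioc fun θ hθ =>
      (hpos x (subset_closure hx) θ (Ioc_subset_Icc_self hθ)).le
  have hM0 : 0 ≤ Mtot := setIntegral_nonneg hΩmeas hρ0
  have hQ1nn : 0 ≤ Q1 := setIntegral_nonneg hΩmeas fun x _ => sq_nonneg _
  have hQ2nn : 0 ≤ Q2 := setIntegral_nonneg hΩmeas fun x _ =>
    setIntegral_nonneg measurableSet_Ioc fun θ _ => sq_nonneg _
  -- Cauchy-Schwarz in x
  have hCS1 : Mtot ^ 2 ≤ c * Q1 := by
    have h := sq_integral_le_measure_mul_integral_sq (μ := volume.restrict Ω) iρ iQ1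
    rw [Measure.restrict_apply_univ, ← hcdef, ← hM, ← hQ1] at h
    exact h
  -- Cauchy-Schwarz on the product
  have hnint : Integrable (Function.uncurry n)
      ((volume.restrict Ω).prod (volume.restrict (Ioc (-A) A))) :=
    integrable_prod_restrict hΩJ Ioc_subset_Icc_self hJcl isCompact_Icc hnc
  have hn2int : Integrable (fun p : ℝ × ℝ => Function.uncurry n p ^ 2)
      ((volume.restrict Ω).prod (volume.restrict (Ioc (-A) A))) :=
    integrable_prod_restrict hΩJ Ioc_subset_Icc_self hJcl isCompact_Icc (hnc.pow 2)
  have hCS2 : Mtot ^ 2 ≤ (c * (2 * A)) * Q2 := by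
    have h := sq_integral_le_measure_mul_integral_sq hnint hn2int
    rw [integral_prod _ hnint, integral_prod _ hn2int] at h
    have hμ : ((((volume.restrict Ω)).prod (volume.restrict (Ioc (-A) A))) univ).toReal
        = c * (2 * A) := by
      rw [← Set.univ_prod_univ, Measure.prod_prod, Measure.restrict_apply_univ,
        Measure.restrict_apply_univ, Real.volume_Ioc, show A - (-A) = 2 * A by ring,
        ENNReal.toReal_mul, ENNReal.toReal_ofReal (by linarith)]
    rw [hμ] at h
    have hfold : ∀ x : ℝ, (∫ θ in Ioc (-A) A, Function.uncurry n (x, θ)) = ρ x := fun _ => rfl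
    simp_rw [hfold] at h
    have hfold2 : (∫ x in Ω, ∫ θ in Ioc (-A) A, Function.uncurry n (x, θ) ^ 2) = Q2 := rfl
    rw [hfold2, ← hM] at h
    exact h
  -- C_R nonneg
  have hx0 : (a 0 + b 0) / 2 ∈ Ω := by
    rw [hΩ]
    exact mem_iUnion.mpr ⟨0, ⟨by linarith [hab 0], by linarith [hab 0]⟩⟩
  have hCR0 : 0 ≤ C_R :=
    le_trans (abs_nonneg _)
      (hRbound _ (subset_closure hx0) 0 ⟨by linarith, by linarith⟩).1
  have hB0 : 0 ≤ B := le_trans zero_le_one (le_max_left _ _)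
  have hB1 : (1 : ℝ) ≤ B := le_max_left _ _
  have hB2 : 2 * A ≤ B := le_max_right _ _
  -- rewrite the goal
  have hgoal : (∫ x in Ω, ∫ θ in (-A)..A, n x θ) = Mtot := by
    rw [hM]
    exact integral_congr_ae (Eventually.of_forall fun x =>
      intervalIntegral.integral_of_le hAle)
  rw [hgoal]
  have hc0 : 0 ≤ c := ENNReal.toReal_nonneg
  rcases eq_or_lt_of_le hc0 with hc | hc
  · have hv0 : volume Ω = 0 := by
      rcases (ENNReal.toReal_eq_zero_iff _).mp hc.symm with h | h
      · exact h
      · exact absurd h hΩfin.ne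
    have hM0' : Mtot = 0 := by
      rw [hM, Measure.restrict_eq_zero.mpr hv0, integral_zero_measure]
    rw [hM0', ← hc]
    simp
  · have e1 : τ * Mtot ^ 2 ≤ τ * (c * Q1) := mul_le_mul_of_nonneg_left hCS1 hτ.1
    have e2 : (1 - τ) * Mtot ^ 2 ≤ (1 - τ) * ((c * (2 * A)) * Q2) :=
      mul_le_mul_of_nonneg_left hCS2 (by linarith [hτ.2])
    have g1 : 0 ≤ τ * (c * Q1) * (B - 1) :=
      mul_nonneg (mul_nonneg hτ.1 (mul_nonneg hc.le hQ1nn)) (by linarith)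
    have g2 : 0 ≤ (1 - τ) * (c * Q2) * (B - 2 * A) :=
      mul_nonneg (mul_nonneg (by linarith [hτ.2]) (mul_nonneg hc.le hQ2nn)) (by linarith)
    have hPle' : τ * Q1 + (1 - τ) * Q2 ≤ C_R * Mtot := by rw [← key]; exact hPle
    have g3 : c * B * (τ * Q1 + (1 - τ) * Q2) ≤ c * B * (C_R * Mtot) :=
      mul_le_mul_of_nonneg_left hPle' (mul_nonneg hc.le hB0)
    have h1 : Mtot ^ 2 ≤ c * B * (C_R * Mtot) := by nlinarith [e1, e2, g1, g2, g3]
    rcases eq_or_lt_of_le hM0 with hMz | hMz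
    · rw [← hMz]
      exact mul_nonneg (mul_nonneg hCR0 hc0) hB0
    · have h2 : Mtot * Mtot ≤ (C_R * c * B) * Mtot := by
        calc Mtot * Mtot = Mtot ^ 2 := by ring
          _ ≤ c * B * (C_R * Mtot) := h1
          _ = (C_R * c * B) * Mtot := by ring
      exact le_of_mul_le_mul_right h2 hMz
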